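/- For every u in the open strip Δ₀ = {u ∈ ℂ : |Im u| < √3/2}, the complex line integral of v/(v² − v + 1) along the straight segment from u to 1 equals −√3·π/9 − ((3 − √3·i)/6)·Log(u − u₀) − ((3 + √3·i)/6)·Log(u − conj(u₀)), where Log denotes the principal branch of the complex logarithm. In particular this expression defines an analytic extension of T₀ (from [0,∞)) to Δ₀. -/

import Mathlib

/-- The function `T₀` from the paper. -/
noncomputable def T0 (s : ℝ) : ℝ :=
  -(Real.sqrt 3 / 3) * (Real.arctan ((2 * s - 1) / Real.sqrt 3) - Real.pi / 6)
    - Real.log (s ^ 2 - s + 1) / 2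

/-- The point `u₀ = (1 + √3 i)/2`. -/
noncomputable def u0 : ℂ := (1 + Real.sqrt 3 * Complex.I) / 2

/-- The complex line integral of `v/(v² − v + 1)` along the straight segment from `u` to `1`. -/
noncomputable def Ttilde (u : ℂ) : ℂ :=
  ∫ t in (0 : ℝ)..1,
    (1 - u) * ((u + (t : ℂ) * (1 - u)) /
      ((u + (t : ℂ) * (1 - u)) ^ 2 - (u + (t : ℂ) * (1 - u)) + 1))

/-!
Partial fractions split `v / (v² - v + 1)` as `c / (v - u₀) + c̄ / (v - ū₀)`, `c` the residue
at `u₀`. On `Δ₀` the points `v - u₀` and `v - ū₀` lie in the lower and upper half-planes, so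
`F v = c Log (v - u₀) + c̄ Log (v - ū₀)` is a holomorphic primitive there, and the segment
integral is `F 1 - F u`. As `u₀ = exp (iπ/3)` and `1 - u₀ = ū₀`, `F 1 = -√3π/9`. For real `s`,
`Log (s - ū₀)` is the conjugate of `Log (s - u₀)`, so `F s = 2 Re (c Log (s - u₀))`, which the
modulus and argument of `s - u₀` turn into `T₀`.
-/

open Complex ComplexConjugate
open scoped Real

theorem integral_segment_eq_sub_of_hasDerivAt {f F : ℂ → ℂ} {u w : ℂ}
    (hF : ∀ v ∈ segment ℝ u w, HasDerivAt F (f v) v) (hf : ContinuousOn f (segment ℝ u w)) :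
    ∫ t in (0 : ℝ)..1, (w - u) * f (u + (t : ℂ) * (w - u)) = F w - F u := by
  set γ : ℝ → ℂ := fun t => u + (t : ℂ) * (w - u)
  have hγ_mem : Set.MapsTo γ (Set.Icc 0 1) (segment ℝ u w) := by
    rw [segment_eq_image']
    exact fun t ht => ⟨t, ht, by simp [γ, Complex.real_smul]⟩
  have hγ_deriv (t : ℝ) : HasDerivAt γ (w - u) t := by
    simpa [γ] using ((hasDerivAt_id t).ofReal_comp.mul_const (w - u)).const_add u
  have hderiv : ∀ t ∈ Set.uIcc (0 : ℝ) 1, HasDerivAt (F ∘ γ) ((w - u) * f (γ t)) t := by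
    intro t ht
    rw [Set.uIcc_of_le zero_le_one] at ht
    rw [mul_comm]
    exact (hF _ (hγ_mem ht)).comp t (hγ_deriv t)
  have hcont : ContinuousOn (fun t => (w - u) * f (γ t)) (Set.uIcc 0 1) := by
    rw [Set.uIcc_of_le zero_le_one]
    exact continuousOn_const.mul
      (hf.comp (fun t _ => (hγ_deriv t).continuousAt.continuousWithinAt) hγ_mem)
  rw [intervalIntegral.integral_eq_sub_of_hasDerivAt hderiv hcont.intervalIntegrable]
  simp [γ]

theorem div_sub_mul_sub_eq_add {K : Type*} [Field K] {p q v : K}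
    (hp : v - p ≠ 0) (hq : v - q ≠ 0) (hpq : p - q ≠ 0) :
    v / ((v - p) * (v - q)) = p / (p - q) / (v - p) + q / (q - p) / (v - q) := by
  have hqp : q - p ≠ 0 := by rwa [← neg_sub, neg_ne_zero]
  field_simp
  ring

theorem convex_abs_im_lt (r : ℝ) : Convex ℝ {z : ℂ | |z.im| < r} := by
  convert (convex_halfSpace_im_gt (-r)).inter (convex_halfSpace_im_lt r) using 1
  ext z
  simp [abs_lt]

theorem arg_eq_arctan_sub_pi_div_two {z : ℂ} (hz : z.im < 0) :
    arg z = Real.arctan (-z.re / z.im) - π / 2 := by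
  have hz0 : z ≠ 0 := fun h => by simp [h] at hz
  have hnorm : ‖z‖ ≠ 0 := norm_ne_zero_iff.2 hz0
  have htan : Real.tan (arg z + π / 2) = -z.re / z.im := by
    rw [Real.tan_eq_sin_div_cos, Real.sin_add_pi_div_two, Real.cos_add_pi_div_two, cos_arg hz0,
      sin_arg]
    field_simp
  rw [← htan, Real.arctan_tan]
  · ring
  · linarith [neg_pi_lt_arg z]
  · linarith [arg_neg_iff.2 hz]

@[simp] theorem u0_re : u0.re = 1 / 2 := by simp [u0]

@[simp] theorem u0_im : u0.im = √3 / 2 := by simp [u0]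

theorem u0_eq_exp : u0 = exp (↑(π / 3) * I) := by
  rw [exp_mul_I, ← ofReal_cos, ← ofReal_sin, Real.cos_pi_div_three, Real.sin_pi_div_three, u0]
  push_cast
  ring

theorem log_u0 : log u0 = ↑(π / 3) * I := by
  rw [u0_eq_exp, log_exp] <;> simp <;> linarith [Real.pi_pos]

theorem one_sub_u0 : 1 - u0 = conj u0 := by
  apply Complex.ext <;> norm_num

theorem u0_sub_conj_u0 : u0 - conj u0 = √3 * I := by
  apply Complex.ext <;> simp

theorem sub_u0_mul_sub_conj_u0 (v : ℂ) : (v - u0) * (v - conj u0) = v ^ 2 - v + 1 := by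
  have hsum : u0 + conj u0 = 1 := by rw [← one_sub_u0]; ring
  have hprod : u0 * conj u0 = 1 := by
    have : normSq u0 = 1 := by
      rw [normSq_apply, u0_re, u0_im]
      linear_combination Real.mul_self_sqrt (zero_le_three (α := ℝ)) / 4
    rw [mul_conj, this, ofReal_one]
  linear_combination (-v) * hsum + hprod

/-- The residue of `v / (v² - v + 1)` at `u0`. -/
noncomputable def c0 : ℂ := u0 / (u0 - conj u0)

theorem c0_eq : c0 = (3 - √3 * I) / 6 := by
  have h3 : (√3 : ℂ) ^ 2 = 3 := by norm_cast; simp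
  have hne : (√3 : ℂ) ≠ 0 := by norm_cast; positivity
  rw [c0, u0_sub_conj_u0, div_eq_iff (mul_ne_zero hne I_ne_zero), u0]
  linear_combination ((√3 : ℂ) ^ 2 / 6) * I_sq - (1 / 6 : ℂ) * h3

theorem conj_c0_eq : conj c0 = (3 + √3 * I) / 6 := by
  rw [c0_eq]
  simp only [map_div₀, map_sub, map_mul, conj_ofReal, conj_I, map_ofNat]
  ring

/-- The strip `Δ₀`. -/
def strip : Set ℂ := {u : ℂ | |u.im| < √3 / 2}

theorem convex_strip : Convex ℝ strip := convex_abs_im_lt _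

theorem ofReal_mem_strip (s : ℝ) : (s : ℂ) ∈ strip := by
  simp [strip]

theorem im_sub_u0_neg {v : ℂ} (hv : v ∈ strip) : (v - u0).im < 0 := by
  have := (abs_lt.1 (show |v.im| < √3 / 2 from hv)).2
  simp only [sub_im, u0_im]
  linarith

theorem im_sub_conj_u0_pos {v : ℂ} (hv : v ∈ strip) : 0 < (v - conj u0).im := by
  have := (abs_lt.1 (show |v.im| < √3 / 2 from hv)).1
  simp only [sub_im, conj_im, u0_im]
  linarith

theorem sub_u0_mem_slitPlane {v : ℂ} (hv : v ∈ strip) : v - u0 ∈ slitPlane :=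
  mem_slitPlane_iff.2 (.inr (im_sub_u0_neg hv).ne)

theorem sub_conj_u0_mem_slitPlane {v : ℂ} (hv : v ∈ strip) : v - conj u0 ∈ slitPlane :=
  mem_slitPlane_iff.2 (.inr (im_sub_conj_u0_pos hv).ne')

noncomputable def logPrimitive (v : ℂ) : ℂ := c0 * log (v - u0) + conj c0 * log (v - conj u0)

theorem hasDerivAt_logPrimitive {v : ℂ} (hv : v ∈ strip) :
    HasDerivAt logPrimitive (v / (v ^ 2 - v + 1)) v := by
  have h₁ := sub_u0_mem_slitPlane hv
  have h₂ := sub_conj_u0_mem_slitPlane hv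
  refine HasDerivAt.congr_deriv (f := logPrimitive) ((((hasDerivAt_id v).sub_const u0).clog
    h₁).const_mul c0 |>.add <| (((hasDerivAt_id v).sub_const (conj u0)).clog h₂).const_mul _) ?_
  have hu0 : u0 - conj u0 ≠ 0 := by
    rw [u0_sub_conj_u0]
    exact mul_ne_zero (ofReal_ne_zero.2 (by positivity)) I_ne_zero
  rw [← sub_u0_mul_sub_conj_u0, div_sub_mul_sub_eq_add (slitPlane_ne_zero h₁)
    (slitPlane_ne_zero h₂) hu0, c0, map_div₀, map_sub, conj_conj]
  simp only [id_eq]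
  ring

theorem logPrimitive_one : logPrimitive 1 = ((-(√3 * π / 9) : ℝ) : ℂ) := by
  have harg : arg u0 ≠ π := by
    rw [← log_im, log_u0]
    simpa using (by linarith [Real.pi_pos] : π / 3 < π).ne
  have hsub : 1 - conj u0 = u0 := by rw [← one_sub_u0]; ring
  rw [logPrimitive, one_sub_u0, hsub, log_conj _ harg, log_u0, conj_c0_eq, c0_eq, map_mul,
    conj_ofReal, conj_I]
  apply Complex.ext <;> simp
  ring

theorem Ttilde_eq_sub {u : ℂ} (hu : u ∈ strip) :
    Ttilde u = logPrimitive 1 - logPrimitive u := by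
  have hseg : segment ℝ u 1 ⊆ strip := convex_strip.segment_subset hu (ofReal_mem_strip 1)
  refine integral_segment_eq_sub_of_hasDerivAt (f := fun v => v / (v ^ 2 - v + 1))
    (fun v hv => hasDerivAt_logPrimitive (hseg hv)) ?_
  refine (continuousOn_id.div (by fun_prop) fun v hv => ?_).mono hseg
  rw [← sub_u0_mul_sub_conj_u0]
  exact mul_ne_zero (slitPlane_ne_zero (sub_u0_mem_slitPlane hv))
    (slitPlane_ne_zero (sub_conj_u0_mem_slitPlane hv))

theorem logPrimitive_ofReal (s : ℝ) :
    logPrimitive s = ((Real.log (s ^ 2 - s + 1) / 2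
      + √3 / 3 * (Real.arctan ((2 * s - 1) / √3) - π / 2) : ℝ) : ℂ) := by
  set z := (s : ℂ) - u0
  have hz : z.im < 0 := im_sub_u0_neg (ofReal_mem_strip s)
  have hnorm : ‖z‖ = √(s ^ 2 - s + 1) := by
    rw [norm_def, normSq_apply]
    congr 1
    simp only [z, sub_re, sub_im, ofReal_re, ofReal_im, u0_re, u0_im]
    linear_combination Real.mul_self_sqrt (zero_le_three (α := ℝ)) / 4
  have harg : arg z = Real.arctan ((2 * s - 1) / √3) - π / 2 := by
    rw [arg_eq_arctan_sub_pi_div_two hz]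
    congr 2
    simp only [z, sub_re, sub_im, ofReal_re, ofReal_im, u0_re, u0_im]
    field_simp
    ring
  have hconj : (s : ℂ) - conj u0 = conj z := by simp [z]
  have hargπ : arg z ≠ π := ((arg_neg_iff.2 hz).trans Real.pi_pos).ne
  have hre : c0.re = 1 / 2 := by rw [c0_eq]; simp; norm_num
  have him : c0.im = -(√3 / 6) := by rw [c0_eq]; simp; ring
  have hpos : 0 ≤ s ^ 2 - s + 1 := by nlinarith [sq_nonneg (s - 1 / 2)]
  rw [logPrimitive, hconj, log_conj _ hargπ, ← map_mul, add_conj]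
  change ((2 * (c0 * log z).re : ℝ) : ℂ) = _
  rw [mul_re, log_re, log_im, hnorm, harg, hre, him, Real.log_sqrt hpos]
  push_cast
  ring

theorem Ttilde_eq_log_formula :
    (∀ u : ℂ, |u.im| < Real.sqrt 3 / 2 →
      Ttilde u = ((-(Real.sqrt 3 * Real.pi / 9) : ℝ) : ℂ)
        - ((3 - Real.sqrt 3 * Complex.I) / 6) * Complex.log (u - u0)
        - ((3 + Real.sqrt 3 * Complex.I) / 6) * Complex.log (u - (starRingEnd ℂ) u0)) ∧
    DifferentiableOn ℂ Ttilde {u : ℂ | |u.im| < Real.sqrt 3 / 2} ∧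
    (∀ s : ℝ, 0 ≤ s → Ttilde (s : ℂ) = ((T0 s : ℝ) : ℂ)) := by
  refine ⟨fun u hu => ?_, ?_, fun s _ => ?_⟩
  · rw [Ttilde_eq_sub hu, logPrimitive_one, logPrimitive, ← c0_eq, ← conj_c0_eq]
    ring
  · refine DifferentiableOn.congr (f := fun u => logPrimitive 1 - logPrimitive u) ?_
      fun u hu => Ttilde_eq_sub hu
    exact fun u hu =>
      ((hasDerivAt_logPrimitive hu).differentiableAt.const_sub _).differentiableWithinAt
  · rw [Ttilde_eq_sub (ofReal_mem_strip s), logPrimitive_one, logPrimitive_ofReal, T0]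
    push_cast
    ring
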